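/- Suppose that for every clique C of G of size K + 2 and every vertex v ∉ C with at least K + 1 neighbours in C, there is no vertex v' ∉ C ∪ {v} with at least K + 1 neighbours in C ∪ {v}. Then for every DVOP order rank for (G, K) with n ≥ K + 4, at least one of the vertices at ranks K + 1, K + 2, and K + 3 is a double. -/
import Mathlib


open Finset

/-- A DVOP order for `(G, K)`: a bijection `rank : V → {0, …, n-1}` such that the vertices
of rank `< K` (i.e. `≤ K - 1`) induce a clique, and every vertex of rank `≥ K` has at least
`K` adjacent predecessors. -/
def IsDVOPOrder {V : Type*} [Fintype V] [DecidableEq V] (G : SimpleGraph V)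
    [DecidableRel G.Adj] (K : ℕ) (rank : V ≃ Fin (Fintype.card V)) : Prop :=
  (∀ v u, v ≠ u → (rank v : ℕ) < K → (rank u : ℕ) < K → G.Adj v u) ∧
  (∀ v, K ≤ (rank v : ℕ) →
    K ≤ ((G.neighborFinset v).filter (fun u => (rank u : ℕ) < (rank v : ℕ))).card)

/-- The number of adjacent predecessors of `v` in the order given by `rank`. -/
def numAdjPred {V : Type*} [Fintype V] [DecidableEq V] (G : SimpleGraph V)
    [DecidableRel G.Adj] (rank : V ≃ Fin (Fintype.card V)) (v : V) : ℕ :=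
  ((G.neighborFinset v).filter (fun u => (rank u : ℕ) < (rank v : ℕ))).card

lemma card_pred {V : Type*} [Fintype V] [DecidableEq V]
    (rank : V ≃ Fin (Fintype.card V)) (m : ℕ) (hm : m ≤ Fintype.card V) :
    (univ.filter (fun u => ((rank u : ℕ) < m))).card = m := by
  rw [← Finset.card_range m]
  apply Finset.card_bij (fun u _ => (rank u : ℕ))
  · intro a ha; simp at ha ⊢; exact ha
  · intro a _ b _ hab; exact rank.injective (Fin.val_injective hab)
  · intro j hj; simp only [Finset.mem_range] at hj
    exact ⟨rank.symm ⟨j, lt_of_lt_of_le hj hm⟩, by simp [hj], by simp⟩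

theorem dvop_double_at_K1_K2_or_K3 {V : Type*} [Fintype V] [DecidableEq V]
    (G : SimpleGraph V) [DecidableRel G.Adj] (K : ℕ) (hK : 1 ≤ K)
    (hext : ∀ C : Finset V, G.IsNClique (K + 2) C →
      ∀ v ∉ C, K + 1 ≤ (G.neighborFinset v ∩ C).card →
      ∀ v' ∉ insert v C, ¬ (K + 1 ≤ (G.neighborFinset v' ∩ insert v C).card))
    (hn : K + 4 ≤ Fintype.card V)
    (rank : V ≃ Fin (Fintype.card V)) (h : IsDVOPOrder G K rank) :
    ∀ u v x, (rank u : ℕ) = K + 1 → (rank v : ℕ) = K + 2 → (rank x : ℕ) = K + 3 →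
      numAdjPred G rank u = K ∨ numAdjPred G rank v = K ∨ numAdjPred G rank x = K := by
  intro u v x hu hv hx
  by_contra hcon
  push_neg at hcon
  obtain ⟨hu', hv', hx'⟩ := hcon
  -- numAdjPred ≤ rank
  have hle : ∀ w : V, numAdjPred G rank w ≤ (rank w : ℕ) := by
    intro w
    have hsub : ((G.neighborFinset w).filter (fun a => (rank a : ℕ) < (rank w : ℕ)))
        ⊆ univ.filter (fun a => (rank a : ℕ) < (rank w : ℕ)) := by
      intro a ha; simp_all
    calc numAdjPred G rank w ≤ (univ.filter (fun a => (rank a : ℕ) < (rank w : ℕ))).card :=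
          Finset.card_le_card hsub
      _ = (rank w : ℕ) := card_pred rank _ (le_of_lt (rank w).isLt)
  -- if numAdjPred w = rank w then w adjacent to all predecessors
  have hall : ∀ w a : V, numAdjPred G rank w = (rank w : ℕ) → (rank a : ℕ) < (rank w : ℕ) →
      G.Adj w a := by
    intro w a hw ha
    have hsub : ((G.neighborFinset w).filter (fun b => (rank b : ℕ) < (rank w : ℕ)))
        ⊆ univ.filter (fun b => (rank b : ℕ) < (rank w : ℕ)) := by
      intro b hb; simp_all
    have hcard : (univ.filter (fun b => (rank b : ℕ) < (rank w : ℕ))).card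
        ≤ ((G.neighborFinset w).filter (fun b => (rank b : ℕ) < (rank w : ℕ))).card := by
      rw [card_pred rank _ (le_of_lt (rank w).isLt)]; exact le_of_eq hw.symm
    have heq := Finset.eq_of_subset_of_card_le hsub hcard
    have : a ∈ (G.neighborFinset w).filter (fun b => (rank b : ℕ) < (rank w : ℕ)) := by
      rw [heq]; simp only [Finset.mem_filter, Finset.mem_univ, true_and]; exact ha
    simp only [Finset.mem_filter, SimpleGraph.mem_neighborFinset] at this
    exact this.1
  -- u is the unique vertex of rank K+1, and numAdjPred u = K+1
  have hufull : numAdjPred G rank u = K + 1 := by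
    have h1 : K ≤ numAdjPred G rank u := h.2 u (by omega)
    have h2 := hle u
    omega
  -- vertices of rank K are fully adjacent to predecessors
  have hKfull : ∀ w : V, (rank w : ℕ) = K → numAdjPred G rank w = K := by
    intro w hw
    have h1 : K ≤ numAdjPred G rank w := h.2 w (by omega)
    have h2 := hle w
    omega
  -- C0 : ranks 0..K+1
  set C0 : Finset V := univ.filter (fun w => (rank w : ℕ) < K + 2) with hC0
  have hC0card : C0.card = K + 2 := card_pred rank _ (by omega)
  have hclique : G.IsNClique (K + 2) C0 := by
    constructor
    · intro a ha b hb hab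
      simp only [hC0, Finset.coe_filter, Set.mem_setOf_eq, Finset.mem_univ, true_and] at ha hb
      have hrne : (rank a : ℕ) ≠ (rank b : ℕ) := by
        intro hr; exact hab (rank.injective (Fin.val_injective hr))
      -- wlog rank a < rank b considered via cases
      rcases lt_or_gt_of_ne hrne with hlt | hlt
      · -- a has smaller rank; show Adj b a then symm
        rcases Nat.lt_or_ge (rank b : ℕ) K with hbK | hbK
        · exact h.1 a b hab (by omega) hbK
        · have hb' : (rank b : ℕ) = K ∨ (rank b : ℕ) = K + 1 := by omega
          have : numAdjPred G rank b = (rank b : ℕ) := by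
            rcases hb' with h1 | h1
            · rw [h1]; exact hKfull b h1
            · have : b = u := rank.injective (Fin.val_injective (by rw [h1, hu]))
              rw [this, hu]; exact hufull
          exact (hall b a this hlt).symm
      · rcases Nat.lt_or_ge (rank a : ℕ) K with haK | haK
        · exact h.1 a b hab haK (by omega)
        · have ha' : (rank a : ℕ) = K ∨ (rank a : ℕ) = K + 1 := by omega
          have : numAdjPred G rank a = (rank a : ℕ) := by
            rcases ha' with h1 | h1
            · rw [h1]; exact hKfull a h1
            · have : a = u := rank.injective (Fin.val_injective (by rw [h1, hu]))
              rw [this, hu]; exact hufull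
          exact hall a b this hlt
    · exact hC0card
  have hvnot : v ∉ C0 := by simp [hC0, hv]
  have hvcard : K + 1 ≤ (G.neighborFinset v ∩ C0).card := by
    have heq : G.neighborFinset v ∩ C0
        = (G.neighborFinset v).filter (fun a => (rank a : ℕ) < (rank v : ℕ)) := by
      ext a; simp [hC0, hv, and_comm]
    rw [heq]
    have h1 : K ≤ numAdjPred G rank v := h.2 v (by omega)
    have : numAdjPred G rank v ≠ K := hv'
    unfold numAdjPred at h1 this
    omega
  have hins : insert v C0 = univ.filter (fun w => (rank w : ℕ) < K + 3) := by
    ext a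
    simp only [Finset.mem_insert, hC0, Finset.mem_filter, Finset.mem_univ, true_and]
    constructor
    · rintro (rfl | h1) <;> omega
    · intro h1
      rcases Nat.lt_or_ge (rank a : ℕ) (K + 2) with h2 | h2
      · right; exact h2
      · left
        exact rank.injective (Fin.val_injective (by omega))
  have hxnot : x ∉ insert v C0 := by
    rw [hins]; simp [hx]
  have hxcard : K + 1 ≤ (G.neighborFinset x ∩ insert v C0).card := by
    have heq : G.neighborFinset x ∩ insert v C0
        = (G.neighborFinset x).filter (fun a => (rank a : ℕ) < (rank x : ℕ)) := by
      rw [hins]; ext a; simp [hx, and_comm]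
    rw [heq]
    have h1 : K ≤ numAdjPred G rank x := h.2 x (by omega)
    have : numAdjPred G rank x ≠ K := hx'
    unfold numAdjPred at h1 this
    omega
  exact hext C0 hclique v hvnot hvcard x hxnot hxcard
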